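/- Let (X,μ) be a finite measure space with L²(X,μ) separable, endowed with a right action β : X × S → X of a group S for which μ is quasi-invariant with densities j(·,s), let {a(·,s)}_{s∈S} be a 𝕋-valued scalar cocycle, let π_a be the associated unitary representation on H = L²(X,μ), and set S₀ := {s ∈ S : x.s = x for a.e. x ∈ X}. If the linear span of {a(·,s) : s ∈ S₀} is weak-* dense in L^∞(X,μ), then π_a is multiplicity-free: the commutant π_a(S)' = {T ∈ B(H) : Tπ_a(s) = π_a(s)T for all s ∈ S} is a commutative algebra. -/

import Mathlib

/-!
For `s ∈ S₀` the map `β s` moves only a null set, so quasi-invariance forces `j(·,s) = 1`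
a.e. and `π_a(s)` is multiplication by `a(·,s)`. If `T` commutes with these operators, then for
all `u, v ∈ L²` the integrable function `conj v · T u - conj (T† v) · u` is annihilated by every
`a(·,s)`, `s ∈ S₀`, hence vanishes by weak-* density; taking `v = 1` shows that `T` is
multiplication by `conj (T† 1)`. Multiplication operators commute with each other.
-/

open MeasureTheory
open scoped ComplexConjugate InnerProductSpace

namespace MeasureTheory

variable {X : Type*} [MeasurableSpace X] {μ : Measure X}

theorem measure_image_eq_of_eq_on_compl_null {f : X → X} {N : Set X} (hf : ∀ x ∉ N, f x = x)
    (hN : μ N = 0) (hfN : μ (f '' N) = 0) (E : Set X) : μ (f '' E) = μ E := by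
  refine le_antisymm ?_ ?_
  · calc μ (f '' E) ≤ μ (E ∪ f '' N) := by
          refine measure_mono ?_
          rintro _ ⟨x, hxE, rfl⟩
          by_cases hx : x ∈ N
          · exact Or.inr ⟨x, hx, rfl⟩
          · exact Or.inl (by rwa [hf x hx])
      _ = μ E := measure_congr (union_ae_eq_left_of_ae_eq_empty (ae_eq_empty.mpr hfN))
  · calc μ E = μ (E \ N) := (measure_sdiff_null hN).symm
      _ ≤ μ (f '' E) := measure_mono fun x hx => ⟨x, hx.1, hf x hx.2⟩

theorem ae_eq_one_of_measure_image_eq_setLIntegral [SigmaFinite μ] {f : X → X} {ρ : X → ℝ}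
    (hρ : Measurable ρ)
    (hquasi : ∀ E, MeasurableSet E → μ (f '' E) = ∫⁻ x in E, ENNReal.ofReal (ρ x) ∂μ)
    (hf : ∀ᵐ x ∂μ, f x = x) : ∀ᵐ x ∂μ, ρ x = 1 := by
  obtain ⟨N, hsub, hNmeas, hN⟩ := exists_measurable_superset_of_null (ae_iff.mp hf)
  have hfN : μ (f '' N) = 0 := by
    rw [hquasi N hNmeas]
    exact setLIntegral_measure_zero _ _ hN
  have hρ_one : (fun x => ENNReal.ofReal (ρ x)) =ᵐ[μ] fun _ => 1 := by
    refine ae_eq_of_forall_setLIntegral_eq_of_sigmaFinite hρ.ennreal_ofReal measurable_const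
      fun E hE _ => ?_
    rw [← hquasi E hE, measure_image_eq_of_eq_on_compl_null (fun x hx => ?_) hN hfN,
      setLIntegral_const, one_mul]
    exact not_not.mp fun h => hx (hsub h)
  filter_upwards [hρ_one] with x hx
  exact ENNReal.ofReal_eq_one.mp hx

end MeasureTheory

namespace MeasureTheory.L2

variable {X : Type*} [MeasurableSpace X] {μ : Measure X}

theorem inner_eq_integral_mul_inner_of_ae_eq_mul {m : X → ℂ} {u w : Lp ℂ 2 μ}
    (hw : ⇑w =ᵐ[μ] fun x => m x * u x) (v : Lp ℂ 2 μ) :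
    ⟪v, w⟫_ℂ = ∫ x, m x * ⟪v x, u x⟫_ℂ ∂μ := by
  rw [inner_def]
  refine integral_congr_ae ?_
  filter_upwards [hw] with x hx
  rw [hx, RCLike.inner_apply', RCLike.inner_apply', mul_left_comm]

theorem integrable_mul_inner_of_ae_eq_mul {m : X → ℂ} {u w : Lp ℂ 2 μ}
    (hw : ⇑w =ᵐ[μ] fun x => m x * u x) (v : Lp ℂ 2 μ) :
    Integrable (fun x => m x * ⟪v x, u x⟫_ℂ) μ := by
  refine (integrable_inner v w).congr ?_
  filter_upwards [hw] with x hx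
  rw [hx, RCLike.inner_apply', RCLike.inner_apply', mul_left_comm]

theorem exists_ae_eq_mul_of_commute [IsFiniteMeasure μ] {ι : Type*}
    {m : ι → X → ℂ} {P : ι → Lp ℂ 2 μ →L[ℂ] Lp ℂ 2 μ}
    (hP : ∀ i u, ⇑(P i u) =ᵐ[μ] fun x => m i x * u x)
    (htotal : ∀ ψ : X → ℂ, Integrable ψ μ → (∀ i, ∫ x, m i x * ψ x ∂μ = 0) → ψ =ᵐ[μ] 0)
    {T : Lp ℂ 2 μ →L[ℂ] Lp ℂ 2 μ} (hT : ∀ i, T.comp (P i) = (P i).comp T) :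
    ∃ g : X → ℂ, ∀ u, ⇑(T u) =ᵐ[μ] fun x => g x * u x := by
  refine ⟨fun x => conj (T.adjoint (Lp.const 2 μ (1 : ℂ)) x), fun u => ?_⟩
  have key : ∀ v : Lp ℂ 2 μ,
      (fun x => ⟪v x, T u x⟫_ℂ - ⟪T.adjoint v x, u x⟫_ℂ) =ᵐ[μ] 0 := by
    intro v
    refine htotal _ ((integrable_inner v (T u)).sub (integrable_inner _ u)) fun i => ?_
    have hcomm : T (P i u) = P i (T u) := DFunLike.congr_fun (hT i) u
    simp only [mul_sub]
    rw [integral_sub (integrable_mul_inner_of_ae_eq_mul (hP i (T u)) v)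
        (integrable_mul_inner_of_ae_eq_mul (hP i u) _),
      ← inner_eq_integral_mul_inner_of_ae_eq_mul (hP i (T u)),
      ← inner_eq_integral_mul_inner_of_ae_eq_mul (hP i u),
      ContinuousLinearMap.adjoint_inner_left, hcomm, sub_self]
  filter_upwards [key (Lp.const 2 μ 1), Lp.coeFn_const (p := 2) (μ := μ) (1 : ℂ)] with x hx h1
  rw [Pi.zero_apply, sub_eq_zero, RCLike.inner_apply', RCLike.inner_apply', h1,
    Function.const_apply, map_one, one_mul] at hx
  exact hx

theorem comp_comm_of_ae_eq_mul {T₁ T₂ : Lp ℂ 2 μ →L[ℂ] Lp ℂ 2 μ}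
    (hT₁ : ∃ g : X → ℂ, ∀ u, ⇑(T₁ u) =ᵐ[μ] fun x => g x * u x)
    (hT₂ : ∃ g : X → ℂ, ∀ u, ⇑(T₂ u) =ᵐ[μ] fun x => g x * u x) :
    T₁.comp T₂ = T₂.comp T₁ := by
  obtain ⟨g₁, hT₁⟩ := hT₁
  obtain ⟨g₂, hT₂⟩ := hT₂
  ext1 u
  refine Lp.ext ?_
  filter_upwards [hT₁ (T₂ u), hT₂ u, hT₂ (T₁ u), hT₁ u] with x h₁₂ h₂ h₂₁ h₁
  simp only [ContinuousLinearMap.comp_apply]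
  rw [h₁₂, h₂, h₂₁, h₁, mul_left_comm]

end MeasureTheory.L2

theorem stmt8_general {X : Type*} [MeasurableSpace X] (μ : Measure X) [IsFiniteMeasure μ]
    {S : Type*} (β : S → X → X)
    (j : X → S → ℝ)
    (hjmeas : ∀ s, Measurable fun x => j x s)
    (hquasi : ∀ s, ∀ E : Set X, MeasurableSet E →
      μ (β s '' E) = ∫⁻ x in E, ENNReal.ofReal (j x s) ∂μ)
    (a : X → S → ℂ)
    (π : S → Lp ℂ 2 μ →L[ℂ] Lp ℂ 2 μ)
    (hπ : ∀ s (φ : Lp ℂ 2 μ), ⇑(π s φ) =ᵐ[μ]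
      fun x => (Real.sqrt (j x s) : ℂ) * a x s * φ (β s x))
    -- weak-* density of the span of `{a(·,s) : s ∈ S₀}` in `L^∞(X,μ)`:
    (hdense : ∀ ψ : X → ℂ, Integrable ψ μ →
      (∀ s : S, (∀ᵐ x ∂μ, β s x = x) → ∫ x, a x s * ψ x ∂μ = 0) → ψ =ᵐ[μ] 0) :
    ∀ T₁ T₂ : Lp ℂ 2 μ →L[ℂ] Lp ℂ 2 μ,
      (∀ s : S, T₁.comp (π s) = (π s).comp T₁) →
      (∀ s : S, T₂.comp (π s) = (π s).comp T₂) →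
      T₁.comp T₂ = T₂.comp T₁ := by
  intro T₁ T₂ hT₁ hT₂
  let S₀ := {s : S // ∀ᵐ x ∂μ, β s x = x}
  have hπ_S₀ : ∀ (s : S₀) u, ⇑(π s u) =ᵐ[μ] fun x => a x s * u x := by
    rintro ⟨s, hs⟩ u
    filter_upwards [hπ s u, ae_eq_one_of_measure_image_eq_setLIntegral (hjmeas s) (hquasi s) hs,
      hs] with x hπx hjx hβx
    rw [hπx, hjx, hβx, Real.sqrt_one, Complex.ofReal_one, one_mul]
  have htotal : ∀ ψ, Integrable ψ μ → (∀ s : S₀, ∫ x, a x s * ψ x ∂μ = 0) → ψ =ᵐ[μ] 0 :=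
    fun ψ hψ h => hdense ψ hψ fun s hs => h ⟨s, hs⟩
  exact L2.comp_comm_of_ae_eq_mul
    (L2.exists_ae_eq_mul_of_commute hπ_S₀ htotal fun s => hT₁ s)
    (L2.exists_ae_eq_mul_of_commute hπ_S₀ htotal fun s => hT₂ s)

/-- Let `(X,μ)` be a finite measure space with `L²(X,μ)` separable, endowed with a right
action `β` of a group `S` with quasi-invariant measure (densities `j(·,s)`), let `a(·,s)`
be a unit-circle-valued scalar cocycle and `π_a` the associated unitary representation on
`L²(X,μ)`, and let `S₀ = {s ∈ S : x.s = x for a.e. x}`. If the linear span of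
`{a(·,s) : s ∈ S₀}` is weak-* dense in `L^∞(X,μ)` (expressed, via Hahn–Banach and the
duality `L^∞ = (L¹)^*`, as: every `ψ ∈ L¹(X,μ)` with `∫ a(·,s) ψ dμ = 0` for all `s ∈ S₀`
vanishes a.e.), then the representation `π_a` is multiplicity-free: its commutant
`π_a(S)' = {T : Tπ_a(s) = π_a(s)T for all s ∈ S}` is a commutative algebra. -/
theorem stmt8 {X : Type*} [MeasurableSpace X] (μ : Measure X) [IsFiniteMeasure μ]
    [TopologicalSpace.SeparableSpace (Lp ℂ 2 μ)]
    {S : Type*} [Group S] (β : S → X → X)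
    (hβmeas : ∀ s, Measurable (β s))
    (hβone : ∀ x, β 1 x = x)
    (hβmul : ∀ s₁ s₂ : S, ∀ x, β (s₁ * s₂) x = β s₂ (β s₁ x))
    (j : X → S → ℝ)
    (hjmeas : ∀ s, Measurable fun x => j x s)
    (hjpos : ∀ s, ∀ᵐ x ∂μ, 0 < j x s)
    (hquasi : ∀ s, ∀ E : Set X, MeasurableSet E →
      μ (β s '' E) = ∫⁻ x in E, ENNReal.ofReal (j x s) ∂μ)
    (a : X → S → ℂ)
    (hameas : ∀ s, Measurable fun x => a x s)
    (haunit : ∀ s, ∀ᵐ x ∂μ, ‖a x s‖ = 1)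
    (hacoc : ∀ s₁ s₂ : S, ∀ᵐ x ∂μ, a x (s₁ * s₂) = a x s₁ * a (β s₁ x) s₂)
    (haone : ∀ᵐ x ∂μ, a x 1 = 1)
    (π : S → Lp ℂ 2 μ →L[ℂ] Lp ℂ 2 μ)
    (hπ : ∀ s (φ : Lp ℂ 2 μ), ⇑(π s φ) =ᵐ[μ]
      fun x => (Real.sqrt (j x s) : ℂ) * a x s * φ (β s x))
    -- weak-* density of the span of `{a(·,s) : s ∈ S₀}` in `L^∞(X,μ)`:
    (hdense : ∀ ψ : X → ℂ, Integrable ψ μ →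
      (∀ s : S, (∀ᵐ x ∂μ, β s x = x) → ∫ x, a x s * ψ x ∂μ = 0) → ψ =ᵐ[μ] 0) :
    ∀ T₁ T₂ : Lp ℂ 2 μ →L[ℂ] Lp ℂ 2 μ,
      (∀ s : S, T₁.comp (π s) = (π s).comp T₁) →
      (∀ s : S, T₂.comp (π s) = (π s).comp T₂) →
      T₁.comp T₂ = T₂.comp T₁ :=
  stmt8_general μ β j hjmeas hquasi a π hπ hdense
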